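/- A supersolvable arrangement is divisionally free: if A is a supersolvable arrangement in V = K^ℓ, then there exists a flag V = Y_0 ⊋ Y_1 ⊋ ⋯ ⊋ Y_{ℓ−1} with Y_i ∈ L_i(A) such that b_2(A) = Σ_{i=0}^{ℓ−2} (|A^{Y_i}| − |A^{Y_{i+1}}|)·|A^{Y_{i+1}}| (where A^{Y_0} = A). -/

import Mathlib

/-! Basic theory of hyperplane arrangements, their logarithmic derivation modules,
freeness, intersection lattices, Möbius functions, characteristic polynomials,
Betti numbers, localizations, restrictions and multiarrangements. -/

open Module MvPolynomial Classical

noncomputable section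

namespace Arr

variable {K : Type} [Field K] {W : Type} [AddCommGroup W] [Module K W] [FiniteDimensional K W]

/-- A hyperplane in `W`: the kernel of a nonzero linear functional. -/
def IsHyperplane (H : Submodule K W) : Prop :=
  ∃ α : W →ₗ[K] K, α ≠ 0 ∧ LinearMap.ker α = H

/-- A (central) arrangement: a finite set of linear hyperplanes. -/
def IsArrangement (A : Finset (Submodule K W)) : Prop :=
  ∀ H ∈ A, IsHyperplane H

/-- The coordinate ring `S = K[x_1, ..., x_ℓ]` of `W ≅ K^ℓ`, `ℓ = dim W`. -/
abbrev CoordRing (K W : Type) [Field K] [AddCommGroup W] [Module K W]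
    [FiniteDimensional K W] : Type :=
  MvPolynomial (Fin (finrank K W)) K

/-- The module `Der S = ⊕ S ∂/∂xᵢ` of `K`-derivations of `S`. -/
abbrev ArrDeriv (K W : Type) [Field K] [AddCommGroup W] [Module K W]
    [FiniteDimensional K W] : Type :=
  Derivation K (CoordRing K W) (CoordRing K W)

/-- The degree-one polynomial corresponding to a linear form `α ∈ W*`,
with respect to a fixed basis of `W`. -/
def polyOfDual (α : W →ₗ[K] K) : CoordRing K W :=
  ∑ i, MvPolynomial.C (α (finBasis K W i)) * MvPolynomial.X i

/-- The logarithmic derivation module `D(A, m)` of a multiarrangement `(A, m)`: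
all derivations `θ` with `θ(α_H) ∈ S·α_H^{m(H)}` for every `H ∈ A`. -/
def logDerivM (A : Finset (Submodule K W)) (m : Submodule K W → ℕ) :
    Submodule (CoordRing K W) (ArrDeriv K W) where
  carrier := {θ | ∀ H ∈ A, ∀ α : W →ₗ[K] K, LinearMap.ker α = H →
    polyOfDual α ^ m H ∣ θ (polyOfDual α)}
  add_mem' := fun ha hb H hH α hα => by
    rw [Derivation.add_apply]
    exact dvd_add (ha H hH α hα) (hb H hH α hα)
  zero_mem' := fun H hH α hα => by
    rw [Derivation.zero_apply]
    exact dvd_zero _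
  smul_mem' := fun c θ hθ H hH α hα => by
    rw [Derivation.smul_apply, smul_eq_mul]
    exact (hθ H hH α hα).mul_left c

/-- The logarithmic derivation module `D(A)` of an arrangement. -/
def logDeriv (A : Finset (Submodule K W)) : Submodule (CoordRing K W) (ArrDeriv K W) :=
  logDerivM A fun _ => 1

/-- A derivation is homogeneous of (polynomial) degree `d` : it sends every
variable (equivalently, every linear form) to a homogeneous polynomial of degree `d`. -/
def IsHomogDeriv (θ : ArrDeriv K W) (d : ℕ) : Prop :=
  ∀ j, (θ (MvPolynomial.X j)).IsHomogeneous d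

/-- The multiarrangement `(A, m)` is free with exponents `(d 0, ..., d (n-1))`: the module
`D(A,m)` admits a basis of homogeneous derivations of degrees `d 0, ..., d (n-1)`. -/
def IsFreeWithExpM (A : Finset (Submodule K W)) (m : Submodule K W → ℕ)
    {n : ℕ} (d : Fin n → ℕ) : Prop :=
  ∃ b : Basis (Fin n) (CoordRing K W) ↥(logDerivM A m),
    ∀ i, IsHomogDeriv (b i : ArrDeriv K W) (d i)

/-- The multiarrangement `(A, m)` is free. -/
def IsFreeM (A : Finset (Submodule K W)) (m : Submodule K W → ℕ) : Prop :=
  ∃ d : Fin (finrank K W) → ℕ, IsFreeWithExpM A m d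

/-- The arrangement `A` is free with exponents `(d 0, ..., d (n-1))`. -/
def IsFreeWithExp (A : Finset (Submodule K W)) {n : ℕ} (d : Fin n → ℕ) : Prop :=
  IsFreeWithExpM A (fun _ => 1) d

/-- The arrangement `A` is free. -/
def IsFree (A : Finset (Submodule K W)) : Prop :=
  IsFreeM A fun _ => 1

/-- The intersection lattice `L(A)`: all intersections of subfamilies of `A`
(including `W` itself, as the empty intersection). -/
def interLattice (A : Finset (Submodule K W)) : Finset (Submodule K W) :=
  A.powerset.image fun B => B.inf id

/-- Codimension of a subspace. -/
def codim (X : Submodule K W) : ℕ :=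
  finrank K W - finrank K X

/-- The localization `A_X = {H ∈ A : X ⊆ H}`. -/
def localize (A : Finset (Submodule K W)) (X : Submodule K W) : Finset (Submodule K W) :=
  A.filter fun H => X ≤ H

/-- The restriction `A^X = {H ∩ X : H ∈ A \ A_X}`, an arrangement in `X`. -/
def restrict (A : Finset (Submodule K W)) (X : Submodule K W) : Finset (Submodule K ↥X) :=
  (A.filter fun H => ¬ X ≤ H).image fun H => Submodule.comap X.subtype H

/-- Fuel-based recursion computing the Möbius function of the poset `Lat`;
fuel `n` computes correctly all values at elements of codimension at most `n`. -/
def mobiusAux (Lat : Finset (Submodule K W)) : ℕ → Submodule K W → ℤ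
  | 0, _ => 1
  | n + 1, X =>
      if X = ⊤ then 1
      else - ∑ Y ∈ Lat.filter fun Y => X < Y, mobiusAux Lat n Y

/-- The Möbius function of `L(A)`: `μ(W) = 1` and
`μ(X) = - ∑_{Y ∈ L(A), X ⊊ Y} μ(Y)` for `X ≠ W`. -/
def mobius (A : Finset (Submodule K W)) (X : Submodule K W) : ℤ :=
  mobiusAux (interLattice A) (finrank K W) X

/-- The `i`-th Betti number `b_i(A)`: the coefficient of `t^i` in the Poincaré
polynomial `π(A;t) = ∑_{X ∈ L(A)} μ(X)(-t)^{codim X}`. -/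
def betti (A : Finset (Submodule K W)) (i : ℕ) : ℤ :=
  (-1 : ℤ) ^ i * ∑ X ∈ (interLattice A).filter fun X => codim X = i, mobius A X

/-- The characteristic polynomial `χ(A;t) = ∑_{X ∈ L(A)} μ(X) t^{dim X} ∈ ℤ[t]`. -/
def charPoly (A : Finset (Submodule K W)) : Polynomial ℤ :=
  ∑ X ∈ interLattice A, Polynomial.C (mobius A X) * Polynomial.X ^ (finrank K X)

/-- The Ziegler multiplicity `m^H` on `A^H`:
`m^H(Y) = |{L ∈ A \ {H} : H ∩ L = Y}| = |A_Y| - 1`. -/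
def zieglerMult (A : Finset (Submodule K W)) (H : Submodule K W) (Y : Submodule K ↥H) : ℕ :=
  ((A.erase H).filter fun L => Submodule.comap H.subtype L = Y).card

end Arr

open Arr

/-- An arrangement is supersolvable if there is a flag `V = X_0 ⊋ X_1 ⊋ ⋯ ⊋ X_ℓ` with
`X_i ∈ L_i(A)` such that for all distinct `H, L ∈ A_{X_{i+1}} \ A_{X_i}` there is
`K ∈ A_{X_i}` with `H ∩ L ⊆ K`. -/
def Supersolvable {K : Type} [Field K] {W : Type} [AddCommGroup W] [Module K W]
    [FiniteDimensional K W] (A : Finset (Submodule K W)) : Prop :=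
  ∃ X : Fin (Module.finrank K W + 1) → Submodule K W,
    (∀ i, X i ∈ interLattice A ∧ codim (X i) = i.1) ∧
    (∀ i : Fin (Module.finrank K W), X i.succ < X i.castSucc) ∧
    (∀ i : Fin (Module.finrank K W),
      ∀ H ∈ localize A (X i.succ), ∀ L ∈ localize A (X i.succ),
        H ∉ localize A (X i.castSucc) → L ∉ localize A (X i.castSucc) → H ≠ L →
          ∃ M ∈ localize A (X i.castSucc), H ⊓ L ≤ M)

/-!
Let `V = X₀ ⊋ X₁ ⊋ ⋯ ⊋ X_ℓ = 0` be the supersolvable flag. Since `b₂(A) = ∑ (|A_Z| - 1)` over the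
codimension-two flats `Z`, sort these flats by the `k` with `X_{k+1} ⊆ Z ⊉ X_k`. Such a `Z` lies on
exactly one hyperplane of `A_{X_k}`, so `|A_Z| - 1` counts the hyperplanes of
`A_{X_{k+1}} \ A_{X_k}` through `Z`; and for each such hyperplane `H`, `M ↦ M ∩ H` is a bijection
from `A_{X_k}` onto the flats of this block lying on `H`. Hence
`b₂(A) = ∑_k (|A_{X_{k+1}}| - |A_{X_k}|)·|A_{X_k}|`.

For the divisional flag pick `H_k ∈ A_{X_{k+1}} \ A_{X_k}` and put `Y_i = H_{ℓ-1} ∩ ⋯ ∩ H_{ℓ-i}`.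
By induction on `i`, using only modularity of the subspace lattice and the supersolvability
condition, `Y_i` is a complement of `X_{ℓ-i}` and every hyperplane of `A^{Y_i}` is cut out by a
hyperplane of `A_{X_{ℓ-i}}`. Since `H = X_{ℓ-i} + (H ∩ Y_i)` for `H ∈ A_{X_{ℓ-i}}`, this gives
`|A^{Y_i}| = |A_{X_{ℓ-i}}|`, which turns the sum above into the divisional one.
-/

section Lattice

variable {α : Type*} [Lattice α]

def SupersolvableStep (A : Finset α) (x' x : α) : Prop :=
  ∀ H ∈ A, ∀ L ∈ A, x' ≤ H → x' ≤ L → ¬ x ≤ H → ¬ x ≤ L → H ≠ L → ∃ M ∈ A, x ≤ M ∧ H ⊓ L ≤ M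

/-- The hyperplanes of the restriction `A^y` are represented by their traces `y ⊓ G`. -/
def LocalizationSurjectsRestriction (A : Finset α) (x y : α) : Prop :=
  ∀ G ∈ A, ¬ y ≤ G → ∃ H ∈ A, x ≤ H ∧ y ⊓ G = y ⊓ H

theorem localizationSurjectsRestriction_bot_top [BoundedOrder α] {A : Finset α} :
    LocalizationSurjectsRestriction A ⊥ ⊤ :=
  fun G hG _ => ⟨G, hG, bot_le, rfl⟩

theorem IsCompl.not_le_of_le_isCoatom [BoundedOrder α] {x y H : α} (hc : IsCompl x y)
    (hH : IsCoatom H) (hxH : x ≤ H) : ¬ y ≤ H := fun hyH =>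
  hH.ne_top (top_le_iff.1 (hc.sup_eq_top ▸ sup_le hxH hyH))

variable [BoundedOrder α] [IsModularLattice α]

theorem IsCoatom.inf_covBy {G z : α} (hG : IsCoatom G) (hz : ¬ z ≤ G) : z ⊓ G ⋖ z := by
  rw [inf_comm]
  apply inf_covBy_of_covBy_sup_left
  rw [(hG.not_le_iff_codisjoint.1 hz).eq_top]
  exact hG.covBy_top

theorem IsCompl.inf_isCoatom {x' x y k : α} (hc : IsCompl x' y) (hk : IsCoatom k)
    (hxk : ¬ x ≤ k) (hx' : x ⊓ k = x') : IsCompl x (y ⊓ k) := by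
  have hx'k : x' ⊔ y ⊓ k = k := by
    rw [← sup_inf_assoc_of_le y (hx' ▸ inf_le_right), hc.sup_eq_top, top_inf_eq]
  constructor
  · rw [disjoint_iff, inf_comm y, ← inf_assoc, hx', hc.inf_eq_bot]
  · rw [codisjoint_iff, eq_top_iff]
    calc ⊤ = k ⊔ x := (hk.not_le_iff_codisjoint.1 hxk).eq_top.symm
      _ ≤ x ⊔ y ⊓ k := by
        refine sup_le ?_ le_sup_left
        calc k = x' ⊔ y ⊓ k := hx'k.symm
          _ ≤ x ⊔ y ⊓ k := sup_le_sup_right (hx' ▸ inf_le_left) _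

variable {A : Finset α}

theorem LocalizationSurjectsRestriction.inf {x' x y k : α} (hA : ∀ H ∈ A, IsCoatom H)
    (hs : LocalizationSurjectsRestriction A x' y) (hstep : SupersolvableStep A x' x)
    (hkA : k ∈ A) (hx'k : x' ≤ k) (hxk : ¬ x ≤ k) (hc : IsCompl x (y ⊓ k)) :
    LocalizationSurjectsRestriction A x (y ⊓ k) := by
  intro G hGA hG
  obtain ⟨H, hHA, hx'H, hGH⟩ := hs G hGA fun h => hG (inf_le_left.trans h)
  have hykG : y ⊓ k ⊓ G = y ⊓ H ⊓ k := by rw [inf_right_comm, hGH]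
  by_cases hxH : x ≤ H
  · exact ⟨H, hHA, hxH, by rw [hykG, inf_right_comm]⟩
  have hHk : H ≠ k := by
    rintro rfl
    exact hG (hGH ▸ inf_le_right)
  obtain ⟨M, hMA, hxM, hHkM⟩ := hstep H hHA k hkA hx'H hx'k hxH hxk hHk
  refine ⟨M, hMA, hxM, ?_⟩
  have hle : y ⊓ k ⊓ G ≤ y ⊓ k ⊓ M :=
    le_inf inf_le_left (hykG ▸ (inf_le_inf_right k inf_le_right).trans hHkM)
  have hlt : y ⊓ k ⊓ M < y ⊓ k :=
    inf_lt_left.2 (hc.not_le_of_le_isCoatom (hA M hMA) hxM)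
  exact ((hA G hGA).inf_covBy hG).eq_or_eq hle hlt.le |>.resolve_right hlt.ne |>.symm

theorem card_image_inf_eq_card_filter {x y : α} (hA : ∀ H ∈ A, IsCoatom H) (hc : IsCompl x y)
    (hs : LocalizationSurjectsRestriction A x y) :
    ((A.filter fun H => ¬ y ≤ H).image (y ⊓ ·)).card = (A.filter (x ≤ ·)).card := by
  have himage : (A.filter fun H => ¬ y ≤ H).image (y ⊓ ·) = (A.filter (x ≤ ·)).image (y ⊓ ·) := by
    ext Z
    simp only [Finset.mem_image, Finset.mem_filter]
    constructor
    · rintro ⟨G, ⟨hGA, hG⟩, rfl⟩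
      obtain ⟨H, hHA, hxH, hGH⟩ := hs G hGA hG
      exact ⟨H, ⟨hHA, hxH⟩, hGH.symm⟩
    · rintro ⟨H, ⟨hHA, hxH⟩, rfl⟩
      exact ⟨H, ⟨hHA, hc.not_le_of_le_isCoatom (hA H hHA) hxH⟩, rfl⟩
  rw [himage]
  refine Finset.card_image_of_injOn fun H hH H' hH' hHH' => ?_
  -- a hyperplane through `x` is recovered from its trace on the complement `y`
  have hrecover : ∀ L, x ≤ L → x ⊔ y ⊓ L = L := fun L hxL => by
    rw [← sup_inf_assoc_of_le y hxL, hc.sup_eq_top, top_inf_eq]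
  rw [← hrecover H (Finset.mem_filter.1 hH).2, ← hrecover H' (Finset.mem_filter.1 hH').2]
  exact congrArg (x ⊔ ·) hHH'

end Lattice

theorem Antitone.sum_filter_le_eq {α M : Type*} [Preorder α] [AddCommMonoid M] {X : ℕ → α}
    (hX : Antitone X) (s : Finset α) (f : α → M) (n : ℕ) :
    ∑ Z ∈ s.filter (X n ≤ ·), f Z = ∑ Z ∈ s.filter (X 0 ≤ ·), f Z +
      ∑ k ∈ Finset.range n, ∑ Z ∈ s.filter (fun Z => X (k + 1) ≤ Z ∧ ¬ X k ≤ Z), f Z := by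
  induction n with
  | zero => simp
  | succ n ih =>
    rw [Finset.sum_range_succ, ← add_assoc, ← ih,
      ← Finset.sum_filter_add_sum_filter_not (s.filter (X (n + 1) ≤ ·)) (X n ≤ ·),
      Finset.filter_filter, Finset.filter_filter]
    congr 2
    exact Finset.filter_congr fun Z _ => ⟨fun h => h.2, fun h => ⟨(hX n.le_succ).trans h, h⟩⟩

namespace Arr

variable {K : Type} [Field K] {W : Type} [AddCommGroup W] [Module K W] {A : Finset (Submodule K W)}

theorem IsHyperplane.isCoatom {H : Submodule K W} (hH : IsHyperplane H) : IsCoatom H := by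
  obtain ⟨α, hα, rfl⟩ := hH
  exact LinearMap.isCoatom_ker_of_surjective (LinearMap.surjective_of_ne_zero hα)

theorem top_mem_interLattice : (⊤ : Submodule K W) ∈ interLattice A :=
  Finset.mem_image.2 ⟨∅, Finset.empty_mem_powerset A, Finset.inf_empty⟩

theorem mem_interLattice_of_mem {H : Submodule K W} (hH : H ∈ A) : H ∈ interLattice A :=
  Finset.mem_image.2 ⟨{H}, Finset.mem_powerset.2 (Finset.singleton_subset_iff.2 hH),
    Finset.inf_singleton⟩

theorem inf_mem_interLattice {X Y : Submodule K W} (hX : X ∈ interLattice A)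
    (hY : Y ∈ interLattice A) : X ⊓ Y ∈ interLattice A := by
  obtain ⟨B, hB, rfl⟩ := Finset.mem_image.1 hX
  obtain ⟨C, hC, rfl⟩ := Finset.mem_image.1 hY
  rw [Finset.mem_powerset] at hB hC
  exact Finset.mem_image.2 ⟨B ∪ C, Finset.mem_powerset.2 (Finset.union_subset hB hC),
    Finset.inf_union⟩

theorem exists_mem_le_not_le {X Y : Submodule K W} (hX : X ∈ interLattice A) (hY : ¬ Y ≤ X) :
    ∃ H ∈ A, X ≤ H ∧ ¬ Y ≤ H := by
  obtain ⟨B, hB, rfl⟩ := Finset.mem_image.1 hX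
  by_contra! h
  exact hY (Finset.le_inf fun H hH => h H (Finset.mem_powerset.1 hB hH) (Finset.inf_le hH))

@[simp]
theorem mem_localize {H X : Submodule K W} : H ∈ localize A X ↔ H ∈ A ∧ X ≤ H :=
  Finset.mem_filter

theorem localize_top (hA : IsArrangement A) : localize A ⊤ = ∅ :=
  Finset.filter_false_of_mem fun H hH h => (hA H hH).isCoatom.ne_top (top_le_iff.1 h)

theorem filter_interLattice_lt_of_mem (hA : IsArrangement A) {H : Submodule K W} (hH : H ∈ A) :
    (interLattice A).filter (H < ·) = {⊤} := by
  ext Y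
  simp only [Finset.mem_filter, Finset.mem_singleton]
  constructor
  · exact fun h => (hA H hH).isCoatom.lt_iff.1 h.2
  · rintro rfl
    exact ⟨top_mem_interLattice, (hA H hH).isCoatom.lt_top⟩

theorem mobiusAux_top (Lat : Finset (Submodule K W)) (n : ℕ) : mobiusAux Lat n ⊤ = 1 := by
  cases n <;> simp [mobiusAux]

theorem mobiusAux_of_mem (hA : IsArrangement A) {H : Submodule K W} (hH : H ∈ A) (n : ℕ) :
    mobiusAux (interLattice A) (n + 1) H = -1 := by
  rw [mobiusAux, if_neg (hA H hH).isCoatom.ne_top, filter_interLattice_lt_of_mem hA hH,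
    Finset.sum_singleton, mobiusAux_top]

theorem card_restrict (A : Finset (Submodule K W)) (Y : Submodule K W) :
    (restrict A Y).card = ((A.filter fun H => ¬ Y ≤ H).image (Y ⊓ ·)).card := by
  rw [restrict, ← Finset.card_image_of_injective _
    (Submodule.map_injective_of_injective Y.injective_subtype), Finset.image_image]
  exact congrArg Finset.card (Finset.image_congr fun H _ => Submodule.map_comap_subtype Y H)

variable [FiniteDimensional K W]

theorem IsHyperplane.finrank_add_one {H : Submodule K W} (hH : IsHyperplane H) :
    finrank K H + 1 = finrank K W := by
  obtain ⟨α, hα, rfl⟩ := hH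
  exact Module.Dual.finrank_ker_add_one_of_ne_zero hα

theorem IsHyperplane.finrank_inf_add_one {H U : Submodule K W} (hH : IsHyperplane H)
    (hU : ¬ U ≤ H) : finrank K ↥(U ⊓ H) + 1 = finrank K U := by
  have hsup : U ⊔ H = ⊤ := by
    rw [sup_comm]
    exact (hH.isCoatom.not_le_iff_codisjoint.1 hU).eq_top
  have := Submodule.finrank_sup_add_finrank_inf_eq U H
  rw [hsup, finrank_top, ← hH.finrank_add_one] at this
  omega

theorem IsHyperplane.finrank_inf_add_two {H L : Submodule K W} (hH : IsHyperplane H)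
    (hL : IsHyperplane L) (hHL : H ≠ L) : finrank K ↥(H ⊓ L) + 2 = finrank K W := by
  have hnle : ¬ H ≤ L := fun h => hHL ((hH.isCoatom.le_iff_eq hL.isCoatom.ne_top).1 h).symm
  have := hL.finrank_inf_add_one hnle
  have := hH.finrank_add_one
  omega

theorem codim_eq_iff {X : Submodule K W} {c : ℕ} :
    codim X = c ↔ finrank K X + c = finrank K W := by
  have := X.finrank_le
  unfold codim
  omega

theorem IsHyperplane.inf_eq_of_le {H L Z : Submodule K W} (hH : IsHyperplane H)
    (hL : IsHyperplane L) (hHL : H ≠ L) (hZH : Z ≤ H) (hZL : Z ≤ L)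
    (hZr : finrank K Z + 2 = finrank K W) : H ⊓ L = Z :=
  (Submodule.eq_of_le_of_finrank_eq (le_inf hZH hZL)
    (by have := hH.finrank_inf_add_two hL hHL; omega)).symm

theorem exists_inf_eq_of_finrank_add_two (hA : IsArrangement A) {Z : Submodule K W}
    (hZ : Z ∈ interLattice A) (hZr : finrank K Z + 2 = finrank K W) :
    ∃ H ∈ A, ∃ L ∈ A, H ≠ L ∧ H ⊓ L = Z := by
  have htop : ¬ (⊤ : Submodule K W) ≤ Z := fun h => by
    rw [top_le_iff.1 h, finrank_top] at hZr
    omega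
  obtain ⟨H, hHA, hZH, -⟩ := exists_mem_le_not_le hZ htop
  have hHZ : ¬ H ≤ Z := fun h => by
    have := Submodule.finrank_mono h
    have := (hA H hHA).finrank_add_one
    omega
  obtain ⟨L, hLA, hZL, hHL⟩ := exists_mem_le_not_le hZ hHZ
  exact ⟨H, hHA, L, hLA, fun h => hHL h.le, (hA H hHA).inf_eq_of_le (hA L hLA)
    (fun h => hHL h.le) hZH hZL hZr⟩

theorem mem_of_mem_interLattice_of_finrank_add_one (hA : IsArrangement A) {X : Submodule K W}
    (hX : X ∈ interLattice A) (hXr : finrank K X + 1 = finrank K W) : X ∈ A := by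
  have hnle : ¬ (⊤ : Submodule K W) ≤ X := fun h => by
    rw [top_le_iff.1 h, finrank_top] at hXr
    omega
  obtain ⟨H, hHA, hXH, -⟩ := exists_mem_le_not_le hX hnle
  rwa [Submodule.eq_of_le_of_finrank_eq hXH (by have := (hA H hHA).finrank_add_one; omega)]

theorem filter_interLattice_lt_of_finrank_add_two (hA : IsArrangement A) {Z : Submodule K W}
    (hZr : finrank K Z + 2 = finrank K W) :
    (interLattice A).filter (Z < ·) = insert ⊤ (localize A Z) := by
  ext Y
  simp only [Finset.mem_filter, Finset.mem_insert, localize]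
  constructor
  · rintro ⟨hY, hZY⟩
    have := Submodule.finrank_lt_finrank_of_lt hZY
    have := Y.finrank_le
    rcases (by omega : finrank K Y = finrank K W ∨ finrank K Y + 1 = finrank K W) with h | h
    · exact Or.inl (Submodule.eq_top_of_finrank_eq h)
    · exact Or.inr ⟨mem_of_mem_interLattice_of_finrank_add_one hA hY h, hZY.le⟩
  · rintro (rfl | ⟨hYA, hZY⟩)
    · refine ⟨top_mem_interLattice, Submodule.lt_of_le_of_finrank_lt_finrank le_top ?_⟩
      rw [finrank_top]
      omega
    · refine ⟨mem_interLattice_of_mem hYA, Submodule.lt_of_le_of_finrank_lt_finrank hZY ?_⟩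
      have := (hA Y hYA).finrank_add_one
      omega

theorem mobius_of_finrank_add_two (hA : IsArrangement A) {Z : Submodule K W}
    (hZr : finrank K Z + 2 = finrank K W) :
    mobius A Z = (localize A Z).card - 1 := by
  have hZtop : Z ≠ ⊤ := fun h => by
    rw [h, finrank_top] at hZr
    omega
  have htop : ⊤ ∉ localize A Z := fun h => (hA ⊤ (mem_localize.1 h).1).isCoatom.ne_top rfl
  rw [mobius, ← hZr, mobiusAux, if_neg hZtop, filter_interLattice_lt_of_finrank_add_two hA hZr,
    Finset.sum_insert htop, mobiusAux_top,
    Finset.sum_congr rfl fun H (hH : H ∈ localize A Z) =>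
      mobiusAux_of_mem hA (mem_localize.1 hH).1 _,
    Finset.sum_const, nsmul_eq_mul, mul_neg_one]
  ring

theorem betti_two_eq_sum (hA : IsArrangement A) :
    betti A 2 = ∑ Z ∈ (interLattice A).filter (codim · = 2), (((localize A Z).card : ℤ) - 1) := by
  rw [betti, neg_one_sq, one_mul]
  refine Finset.sum_congr rfl fun Z hZ => ?_
  exact mobius_of_finrank_add_two hA (codim_eq_iff.1 (Finset.mem_filter.1 hZ).2)

def codimTwoFlatsBetween (A : Finset (Submodule K W)) (x' x : Submodule K W) :
    Finset (Submodule K W) :=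
  ((interLattice A).filter (codim · = 2)).filter fun Z => x' ≤ Z ∧ ¬ x ≤ Z

variable {x' x : Submodule K W}

theorem mem_codimTwoFlatsBetween {Z : Submodule K W} : Z ∈ codimTwoFlatsBetween A x' x ↔
    Z ∈ interLattice A ∧ finrank K Z + 2 = finrank K W ∧ x' ≤ Z ∧ ¬ x ≤ Z := by
  rw [codimTwoFlatsBetween, Finset.mem_filter, Finset.mem_filter, codim_eq_iff, and_assoc]

theorem SupersolvableStep.existsUnique_mem_localize (hA : IsArrangement A)
    (hstep : SupersolvableStep A x' x) {Z : Submodule K W} (hZ : Z ∈ interLattice A)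
    (hZr : finrank K Z + 2 = finrank K W) (hx'Z : x' ≤ Z) (hxZ : ¬ x ≤ Z) :
    ∃! M, M ∈ localize A x ∧ Z ≤ M := by
  refine existsUnique_of_exists_of_unique ?_ fun M M' ⟨hM, hZM⟩ ⟨hM', hZM'⟩ => ?_
  · obtain ⟨H, hHA, L, hLA, hHL, rfl⟩ := exists_inf_eq_of_finrank_add_two hA hZ hZr
    by_cases hxH : x ≤ H
    · exact ⟨H, mem_localize.2 ⟨hHA, hxH⟩, inf_le_left⟩
    by_cases hxL : x ≤ L
    · exact ⟨L, mem_localize.2 ⟨hLA, hxL⟩, inf_le_right⟩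
    obtain ⟨M, hMA, hxM, hHLM⟩ := hstep H hHA L hLA (hx'Z.trans inf_le_left)
      (hx'Z.trans inf_le_right) hxH hxL hHL
    exact ⟨M, mem_localize.2 ⟨hMA, hxM⟩, hHLM⟩
  · rw [mem_localize] at hM hM'
    by_contra hMM'
    exact hxZ ((hA M hM.1).inf_eq_of_le (hA M' hM'.1) hMM' hZM hZM' hZr ▸ le_inf hM.2 hM'.2)

theorem SupersolvableStep.card_localize_eq (hA : IsArrangement A) (hx : x' ≤ x)
    (hstep : SupersolvableStep A x' x) {H : Submodule K W}
    (hH : H ∈ localize A x' \ localize A x) :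
    (localize A x).card = ((codimTwoFlatsBetween A x' x).filter (· ≤ H)).card := by
  rw [Finset.mem_sdiff, mem_localize, mem_localize] at hH
  obtain ⟨⟨hHA, hx'H⟩, hxH⟩ := hH
  replace hxH : ¬ x ≤ H := fun h => hxH ⟨hHA, h⟩
  have hmaps : ∀ M ∈ localize A x, M ⊓ H ∈ (codimTwoFlatsBetween A x' x).filter (· ≤ H) :=
    fun M hM => by
    rw [mem_localize] at hM
    have hMH : M ≠ H := fun h => hxH (h ▸ hM.2)
    rw [Finset.mem_filter, mem_codimTwoFlatsBetween]
    exact ⟨⟨inf_mem_interLattice (mem_interLattice_of_mem hM.1) (mem_interLattice_of_mem hHA),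
      (hA M hM.1).finrank_inf_add_two (hA H hHA) hMH, le_inf (hx.trans hM.2) hx'H,
      fun h => hxH (h.trans inf_le_right)⟩, inf_le_right⟩
  have hunique : ∀ M ∈ localize A x, ∀ M' ∈ localize A x, M ⊓ H ≤ M' → M = M' :=
    fun M hM M' hM' hle => by
    obtain ⟨⟨hZ, hZr, hx'Z, hxZ⟩, -⟩ :=
      (Finset.mem_filter.1 (hmaps M hM)).imp_left mem_codimTwoFlatsBetween.1
    exact (hstep.existsUnique_mem_localize hA hZ hZr hx'Z hxZ).unique
      ⟨hM, inf_le_left⟩ ⟨hM', hle⟩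
  refine Finset.card_nbij (· ⊓ H) hmaps (fun M hM M' hM' h => hunique M hM M' hM' ?_) ?_
  · rw [show M ⊓ H = M' ⊓ H from h]
    exact inf_le_left
  · intro Z hZ
    obtain ⟨⟨hZ, hZr, hx'Z, hxZ⟩, hZH⟩ :=
      (Finset.mem_filter.1 (Finset.mem_coe.1 hZ)).imp_left mem_codimTwoFlatsBetween.1
    obtain ⟨M, ⟨hM, hZM⟩, -⟩ := hstep.existsUnique_mem_localize hA hZ hZr hx'Z hxZ
    have hMH : M ≠ H := fun h => hxH (h ▸ (mem_localize.1 hM).2)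
    exact ⟨M, hM, (hA M (mem_localize.1 hM).1).inf_eq_of_le (hA H hHA) hMH hZM hZH hZr⟩

theorem SupersolvableStep.sum_card_localize_sub_one (hA : IsArrangement A) (hx : x' ≤ x)
    (hstep : SupersolvableStep A x' x) :
    ∑ Z ∈ codimTwoFlatsBetween A x' x, (((localize A Z).card : ℤ) - 1) =
      (((localize A x').card : ℤ) - (localize A x).card) * (localize A x).card := by
  set B := localize A x' \ localize A x
  have hsub : localize A x ⊆ localize A x' := fun M hM => by
    rw [mem_localize] at hM ⊢
    exact ⟨hM.1, hx.trans hM.2⟩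
  -- the `- 1` removes the unique hyperplane of `A_x` through `Z`
  have hcard : ∀ Z ∈ codimTwoFlatsBetween A x' x,
      ((localize A Z).card : ℤ) - 1 = (B.filter (Z ≤ ·)).card := by
    intro Z hZ
    obtain ⟨hZ, hZr, hx'Z, hxZ⟩ := mem_codimTwoFlatsBetween.1 hZ
    obtain ⟨M, hM, hMuniq⟩ := hstep.existsUnique_mem_localize hA hZ hZr hx'Z hxZ
    have hin : (localize A Z).filter (x ≤ ·) = {M} := by
      refine Finset.eq_singleton_iff_unique_mem.2 ⟨?_, fun M' hM' => hMuniq M' ?_⟩ <;>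
        simp_all only [Finset.mem_filter, mem_localize, and_self]
    have hout : (localize A Z).filter (¬ x ≤ ·) = B.filter (Z ≤ ·) := by
      ext H
      simp only [B, Finset.mem_filter, Finset.mem_sdiff, mem_localize]
      exact ⟨fun ⟨⟨hHA, hZH⟩, hxH⟩ => ⟨⟨⟨hHA, hx'Z.trans hZH⟩, fun h => hxH h.2⟩, hZH⟩,
        fun ⟨⟨⟨hHA, _⟩, hxH⟩, hZH⟩ => ⟨⟨hHA, hZH⟩, fun h => hxH ⟨hHA, h⟩⟩⟩
    rw [← Finset.card_filter_add_card_filter_not (s := localize A Z) (x ≤ ·), hin, hout,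
      Finset.card_singleton]
    push_cast
    ring
  rw [Finset.sum_congr rfl hcard]
  have hdouble := Finset.sum_card_bipartiteAbove_eq_sum_card_bipartiteBelow (· ≤ ·)
    (s := codimTwoFlatsBetween A x' x) (t := B)
  simp only [Finset.bipartiteAbove, Finset.bipartiteBelow] at hdouble
  rw [← Nat.cast_sum, hdouble, Finset.sum_congr rfl fun H hH =>
    (hstep.card_localize_eq hA hx hH).symm, Finset.sum_const, smul_eq_mul,
    Finset.card_sdiff_of_subset hsub, Nat.cast_mul, Nat.cast_sub (Finset.card_le_card hsub)]

/-- The flag `X 0 ⊋ X 1 ⊋ ⋯ ⊋ X (dim W) = ⊥` of a supersolvable arrangement, continued by `⊥`. -/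
structure IsSupersolvableChain (A : Finset (Submodule K W)) (X : ℕ → Submodule K W) : Prop where
  antitone : Antitone X
  finrank_add : ∀ k ≤ finrank K W, finrank K (X k) + k = finrank K W
  mem_interLattice : ∀ k, X k ∈ interLattice A
  step : ∀ k, SupersolvableStep A (X (k + 1)) (X k)

namespace IsSupersolvableChain

variable {X : ℕ → Submodule K W}

theorem zero_eq_top (hX : IsSupersolvableChain A X) : X 0 = ⊤ :=
  Submodule.eq_top_of_finrank_eq (hX.finrank_add 0 (Nat.zero_le _))

theorem finrank_eq_bot (hX : IsSupersolvableChain A X) : X (finrank K W) = ⊥ :=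
  Submodule.finrank_eq_zero.1 (by have := hX.finrank_add _ le_rfl; omega)

theorem inf_eq_succ (hX : IsSupersolvableChain A X) {k : ℕ} (hk : k < finrank K W)
    {H : Submodule K W} (hH : IsHyperplane H) (hXH : X (k + 1) ≤ H) (hXkH : ¬ X k ≤ H) :
    X k ⊓ H = X (k + 1) :=
  (Submodule.eq_of_le_of_finrank_eq (le_inf (hX.antitone (k.le_add_right 1)) hXH) (by
    have := hH.finrank_inf_add_one hXkH
    have := hX.finrank_add k hk.le
    have := hX.finrank_add (k + 1) hk
    omega)).symm

theorem exists_mem_le_not_le (hX : IsSupersolvableChain A X) {k : ℕ} (hk : k < finrank K W) :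
    ∃ H ∈ A, X (k + 1) ≤ H ∧ ¬ X k ≤ H := by
  refine Arr.exists_mem_le_not_le (hX.mem_interLattice (k + 1)) fun h => ?_
  have := Submodule.finrank_mono h
  have := hX.finrank_add k hk.le
  have := hX.finrank_add (k + 1) hk
  omega

theorem betti_two_eq (hX : IsSupersolvableChain A X) (hA : IsArrangement A) :
    betti A 2 = ∑ k ∈ Finset.range (finrank K W),
      (((localize A (X (k + 1))).card : ℤ) - (localize A (X k)).card) *
        (localize A (X k)).card := by
  rw [betti_two_eq_sum hA]
  set s := (interLattice A).filter (codim · = 2)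
  have hall : s.filter (X (finrank K W) ≤ ·) = s :=
    Finset.filter_true_of_mem fun Z _ => hX.finrank_eq_bot ▸ bot_le
  have hnone : s.filter (X 0 ≤ ·) = ∅ := Finset.filter_false_of_mem fun Z hZ h => by
    rw [hX.zero_eq_top, top_le_iff] at h
    have := codim_eq_iff.1 (Finset.mem_filter.1 hZ).2
    rw [h, finrank_top] at this
    omega
  rw [← hall, hX.antitone.sum_filter_le_eq, hnone, Finset.sum_empty, zero_add]
  exact Finset.sum_congr rfl fun k _ =>
    (hX.step k).sum_card_localize_sub_one hA (hX.antitone (k.le_add_right 1))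

theorem exists_flag (hX : IsSupersolvableChain A X) (hA : IsArrangement A) :
    ∃ Y : ℕ → Submodule K W, Antitone Y ∧ ∀ i ≤ finrank K W, Y i ∈ interLattice A ∧
      codim (Y i) = i ∧ (restrict A (Y i)).card = (localize A (X (finrank K W - i))).card := by
  set n := finrank K W
  have hA' : ∀ H ∈ A, IsCoatom H := fun H hH => (hA H hH).isCoatom
  choose! G hGA hXG hXkG using fun k (hk : k < n) => hX.exists_mem_le_not_le hk
  set Y : ℕ → Submodule K W := fun i => (Finset.range i).inf fun j => G (n - 1 - j)
  have hYsucc : ∀ i, Y (i + 1) = Y i ⊓ G (n - 1 - i) := fun i => by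
    simp only [Y, Finset.range_add_one, Finset.inf_insert, inf_comm]
  have hinv : ∀ i ≤ n, Y i ∈ interLattice A ∧ IsCompl (X (n - i)) (Y i) ∧
      LocalizationSurjectsRestriction A (X (n - i)) (Y i) := by
    intro i hi
    induction i with
    | zero =>
      have hXn : X n = ⊥ := hX.finrank_eq_bot
      simp only [Y, Finset.range_zero, Finset.inf_empty, Nat.sub_zero, hXn]
      exact ⟨top_mem_interLattice, isCompl_bot_top, localizationSurjectsRestriction_bot_top⟩
    | succ i ih =>
      obtain ⟨hYL, hc, hs⟩ := ih (by omega)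
      have hk : n - 1 - i < n := by omega
      have hk1 : n - 1 - i + 1 = n - i := by omega
      have hXG' : X (n - i) ≤ G (n - 1 - i) := hk1 ▸ hXG _ hk
      have hc' := hc.inf_isCoatom (hA' _ (hGA _ hk)) (hXkG _ hk)
        (hk1 ▸ hX.inf_eq_succ hk (hA _ (hGA _ hk)) (hXG _ hk) (hXkG _ hk))
      rw [hYsucc, show n - (i + 1) = n - 1 - i by omega]
      exact ⟨inf_mem_interLattice hYL (mem_interLattice_of_mem (hGA _ hk)), hc',
        hs.inf hA' (hk1 ▸ hX.step _) (hGA _ hk) hXG' (hXkG _ hk) hc'⟩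
  refine ⟨Y, fun i j hij => Finset.inf_mono (Finset.range_mono hij), fun i hi => ?_⟩
  obtain ⟨hYL, hc, hs⟩ := hinv i hi
  refine ⟨hYL, codim_eq_iff.2 ?_, (card_restrict A (Y i)).trans
    (card_image_inf_eq_card_filter hA' hc hs)⟩
  have := Submodule.finrank_add_eq_of_isCompl hc
  have := hX.finrank_add (n - i) (Nat.sub_le n i)
  omega

end IsSupersolvableChain

end Arr

theorem Supersolvable.exists_isSupersolvableChain {K : Type} [Field K] {W : Type} [AddCommGroup W]
    [Module K W] [FiniteDimensional K W] {A : Finset (Submodule K W)} (hss : Supersolvable A) :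
    ∃ X : ℕ → Submodule K W, IsSupersolvableChain A X := by
  set n := finrank K W
  obtain ⟨X, hX, hlt, hstep⟩ := hss
  have hanti : Antitone X := (Fin.strictAnti_iff_succ_lt.2 hlt).antitone
  have hsucc : ∀ k (hk : k < n), (⟨min (k + 1) n, by omega⟩ : Fin (n + 1)) = Fin.succ ⟨k, hk⟩ :=
    fun k hk => Fin.ext (show min (k + 1) n = k + 1 by omega)
  have hcast : ∀ k (hk : k < n), (⟨min k n, by omega⟩ : Fin (n + 1)) = Fin.castSucc ⟨k, hk⟩ :=
    fun k hk => Fin.ext (show min k n = k by omega)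
  refine ⟨fun k => X ⟨min k n, by omega⟩, fun j k hjk => hanti (Fin.mk_le_mk.2 (by omega)),
    fun k hk => ?_, fun k => (hX _).1, fun k H hH L hL hH' hL' hHk hLk hHL => ?_⟩
  · have := codim_eq_iff.1 (hX ⟨min k n, by omega⟩).2
    simp only at this
    omega
  · by_cases hk : k < n
    · simp only [hsucc k hk, hcast k hk] at hH' hL' hHk hLk ⊢
      obtain ⟨M, hM, hHLM⟩ := hstep ⟨k, hk⟩ H (mem_localize.2 ⟨hH, hH'⟩) L
        (mem_localize.2 ⟨hL, hL'⟩) (fun h => hHk (mem_localize.1 h).2)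
        (fun h => hLk (mem_localize.1 h).2) hHL
      exact ⟨M, (mem_localize.1 hM).1, (mem_localize.1 hM).2, hHLM⟩
    · exact absurd (by simpa [show min (k + 1) n = min k n by omega] using hH') hHk

theorem sum_range_sub_mul_eq_sum_range_reflect (a : ℕ → ℤ) (ha : a 0 = 0) (n : ℕ) :
    ∑ k ∈ Finset.range n, (a (k + 1) - a k) * a k =
      ∑ i ∈ Finset.range (n - 1), (a (n - i) - a (n - (i + 1))) * a (n - (i + 1)) := by
  cases n with
  | zero => simp
  | succ n =>
    rw [Finset.sum_range_succ', ha, mul_zero, add_zero, Nat.add_sub_cancel,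
      ← Finset.sum_range_reflect]
    refine Finset.sum_congr rfl fun i hi => ?_
    rw [Finset.mem_range] at hi
    rw [show n - 1 - i + 1 = n + 1 - (i + 1) by omega,
      show n + 1 - (i + 1) + 1 = n + 1 - i by omega]

/-- A supersolvable arrangement is divisionally free: there is a flag
`V = Y_0 ⊋ Y_1 ⊋ ⋯ ⊋ Y_{ℓ-1}`, `Y_i ∈ L_i(A)`, with
`b_2(A) = ∑_{i=0}^{ℓ-2} (|A^{Y_i}| - |A^{Y_{i+1}}|)·|A^{Y_{i+1}}|`. -/
theorem supersolvable_divisionally_free {K : Type} [Field K] {ℓ : ℕ}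
    (A : Finset (Submodule K (Fin ℓ → K))) (hA : IsArrangement A)
    (hss : Supersolvable A) :
    ∃ Y : Fin ℓ → Submodule K (Fin ℓ → K),
      (∀ i, Y i ∈ interLattice A ∧ codim (Y i) = i.1) ∧
      (∀ i : Fin (ℓ - 1),
        Y ⟨i.1 + 1, by have := i.2; omega⟩ < Y ⟨i.1, by have := i.2; omega⟩) ∧
      betti A 2 = ∑ i : Fin (ℓ - 1),
        (((restrict A (Y ⟨i.1, by have := i.2; omega⟩)).card : ℤ)
            - ((restrict A (Y ⟨i.1 + 1, by have := i.2; omega⟩)).card : ℤ))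
          * ((restrict A (Y ⟨i.1 + 1, by have := i.2; omega⟩)).card : ℤ) := by
  obtain ⟨X, hX⟩ := hss.exists_isSupersolvableChain
  obtain ⟨Y, hYanti, hY⟩ := hX.exists_flag hA
  have hn : finrank K (Fin ℓ → K) = ℓ := Module.finrank_fin_fun K
  rw [hn] at hY
  refine ⟨fun i => Y i, fun i => ⟨(hY i i.2.le).1, (hY i i.2.le).2.1⟩, fun i => ?_, ?_⟩
  · refine lt_of_le_of_ne (hYanti (i.1.le_add_right 1)) fun h => ?_
    have := (hY (i + 1) (by omega)).2.1
    rw [show Y (i + 1) = Y i from h, (hY i (by omega)).2.1] at this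
    omega
  · have hX0 : ((localize A (X 0)).card : ℤ) = 0 := by
      rw [hX.zero_eq_top, localize_top hA, Finset.card_empty, Nat.cast_zero]
    rw [hX.betti_two_eq hA, hn]
    refine (sum_range_sub_mul_eq_sum_range_reflect (fun k => (localize A (X k)).card) hX0 ℓ).trans
      ?_
    rw [← Fin.sum_univ_eq_sum_range]
    refine Finset.sum_congr rfl fun i _ => ?_
    simp only [(hY _ (by omega : i.1 ≤ ℓ)).2.2, (hY _ (by omega : i.1 + 1 ≤ ℓ)).2.2]
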